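/- arXiv:2007.03814 — 2 statements merged into one kernel-verified Lean document; each statement's English description precedes it below -/
import Mathlib

section
/- For α > 1 and probability measures Q ≪ P, the supremum over bounded measurable g of {(1/(α-1)) log ∫ e^{(α-1)g} dQ - (1/α) log ∫ e^{αg} dP} equals (1/(α(α-1))) log ∫ (dQ/dP)^α dP. -/
/-!
Write `f = dQ/dP` and `I = ∫ f^α dP`, which also equals `∫ f^(α-1) dQ`. Since
`∫ e^((α-1)g) dQ = ∫ e^((α-1)g) f dP`, Hölder's inequality with exponents `α/(α-1)` and `α`
bounds it by `(∫ e^(αg) dP)^((α-1)/α) I^(1/α)`, and taking logarithms gives the upper bound.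

The value is attained at `g = log f`, which is approximated by the bounded functions `g_n`,
the logarithms of `f` clamped to `[e^(-n), e^n]`. Where the clamp does not lift `f` we have
`e^(α g_n) ≤ f e^((α-1) g_n)`, and elsewhere `e^(α g_n) = e^(-αn)`, which is at most
`e^(-n)` times `∫ e^((α-1) g_n) dQ`; hence `∫ e^(α g_n) dP ≤ (1 + e^(-n)) ∫ e^((α-1) g_n) dQ`,
so the objective at `g_n` is at least `(α(α-1))⁻¹ log ∫ e^((α-1) g_n) dQ - α⁻¹ log (1 + e^(-n))`.
Finally `∫ e^((α-1) g_n) dQ ≥ ∫ min(f, e^n)^(α-1) dQ`, which increases to `I` by monotone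
convergence, also when `I = ∞`.
-/

open MeasureTheory Real Filter Topology
open scoped ENNReal

section

variable {Ω : Type*}

lemma ENNReal.rpow_eq_mul_rpow_sub_one {α : ℝ} (hα : 1 ≤ α) (y : ℝ≥0∞) :
    y ^ α = y * y ^ (α - 1) := by
  calc y ^ α = y ^ (1 + (α - 1)) := by ring_nf
    _ = y * y ^ (α - 1) := by
      rw [ENNReal.rpow_add_of_nonneg _ _ zero_le_one (by linarith), ENNReal.rpow_one]

noncomputable def clampExp (f : Ω → ℝ≥0∞) (n : ℕ) (x : Ω) : ℝ≥0∞ :=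
  max (min (f x) (ENNReal.ofReal (exp n))) (ENNReal.ofReal (exp (-n)))

noncomputable def logClampExp (f : Ω → ℝ≥0∞) (n : ℕ) (x : Ω) : ℝ :=
  Real.log (clampExp f n x).toReal

lemma clampExp_ne_top (f : Ω → ℝ≥0∞) (n : ℕ) (x : Ω) : clampExp f n x ≠ ⊤ :=
  (max_lt (min_lt_of_right_lt ENNReal.ofReal_lt_top) ENNReal.ofReal_lt_top).ne

lemma exp_neg_le_toReal_clampExp (f : Ω → ℝ≥0∞) (n : ℕ) (x : Ω) :
    exp (-n) ≤ (clampExp f n x).toReal := by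
  rw [← ENNReal.toReal_ofReal (exp_pos _).le]
  exact ENNReal.toReal_mono (clampExp_ne_top f n x) (le_max_right _ _)

lemma abs_logClampExp_le (f : Ω → ℝ≥0∞) (n : ℕ) (x : Ω) : |logClampExp f n x| ≤ n := by
  have hle : clampExp f n x ≤ ENNReal.ofReal (exp n) :=
    max_le (min_le_right _ _) (ENNReal.ofReal_le_ofReal (exp_le_exp.2 (by simp)))
  have hlo := exp_neg_le_toReal_clampExp f n x
  have hhi : (clampExp f n x).toReal ≤ exp n :=
    ENNReal.toReal_le_of_le_ofReal (exp_pos _).le hle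
  rw [abs_le, logClampExp]
  constructor
  · simpa using Real.log_le_log (exp_pos _) hlo
  · simpa using Real.log_le_log ((exp_pos _).trans_le hlo) hhi

lemma ofReal_exp_logClampExp (f : Ω → ℝ≥0∞) (n : ℕ) (x : Ω) :
    ENNReal.ofReal (exp (logClampExp f n x)) = clampExp f n x := by
  rw [logClampExp, exp_log ((exp_pos _).trans_le (exp_neg_le_toReal_clampExp f n x)),
    ENNReal.ofReal_toReal (clampExp_ne_top f n x)]

variable [MeasurableSpace Ω]

lemma measurable_clampExp {f : Ω → ℝ≥0∞} (hf : Measurable f) (n : ℕ) :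
    Measurable (clampExp f n) :=
  (hf.min measurable_const).max measurable_const

lemma measurable_logClampExp {f : Ω → ℝ≥0∞} (hf : Measurable f) (n : ℕ) :
    Measurable (logClampExp f n) :=
  (measurable_clampExp hf n).ennreal_toReal.log

section BoundedExponent

variable {μ : Measure Ω} [IsFiniteMeasure μ] {g : Ω → ℝ} {C : ℝ}

lemma integrable_exp_mul_of_abs_le (hg : Measurable g) (hC : ∀ x, |g x| ≤ C) (β : ℝ) :
    Integrable (fun x ↦ exp (β * g x)) μ := by
  refine .of_bound (hg.const_mul β).exp.aestronglyMeasurable (exp (|β| * C)) (ae_of_all _ ?_)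
  intro x
  rw [Real.norm_eq_abs, abs_exp, exp_le_exp]
  calc β * g x ≤ |β| * |g x| := (le_abs_self _).trans (abs_mul _ _).le
    _ ≤ |β| * C := by gcongr; exact hC x

lemma ofReal_integral_exp_mul (hg : Measurable g) (hC : ∀ x, |g x| ≤ C) (β : ℝ) :
    ENNReal.ofReal (∫ x, exp (β * g x) ∂μ) = ∫⁻ x, ENNReal.ofReal (exp (g x)) ^ β ∂μ := by
  rw [ofReal_integral_eq_lintegral_ofReal (integrable_exp_mul_of_abs_le hg hC β)
    (ae_of_all _ fun _ ↦ (exp_pos _).le)]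
  congr with x
  rw [ENNReal.ofReal_rpow_of_pos (exp_pos _), ← Real.exp_mul, mul_comm]

lemma integral_exp_mul_pos [NeZero μ] (hg : Measurable g) (hC : ∀ x, |g x| ≤ C) (β : ℝ) :
    0 < ∫ x, exp (β * g x) ∂μ :=
  integral_exp_pos (integrable_exp_mul_of_abs_le hg hC β)

end BoundedExponent

lemma tendsto_lintegral_min_rpow {μ : Measure Ω} {f : Ω → ℝ≥0∞} (hf : Measurable f) {β : ℝ}
    (hβ : 0 ≤ β) :
    Tendsto (fun n : ℕ ↦ ∫⁻ x, min (f x) (ENNReal.ofReal (exp n)) ^ β ∂μ) atTop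
      (𝓝 (∫⁻ x, f x ^ β ∂μ)) := by
  refine lintegral_tendsto_of_tendsto_of_monotone
    (fun n ↦ ((hf.min measurable_const).pow_const β).aemeasurable) (ae_of_all _ ?_)
    (ae_of_all _ fun x ↦ ?_)
  · intro x m n hmn
    dsimp only
    gcongr
  · have hexp : Tendsto (fun n : ℕ ↦ ENNReal.ofReal (exp n)) atTop (𝓝 ⊤) :=
      ENNReal.tendsto_ofReal_atTop.comp (tendsto_exp_atTop.comp tendsto_natCast_atTop_atTop)
    simpa [Function.comp_def] using
      (ENNReal.continuous_rpow_const.tendsto _).comp (tendsto_const_nhds.min hexp)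

section ChangeOfMeasure

variable {Q P : Measure Ω} [Q.HaveLebesgueDecomposition P] {α : ℝ}

lemma lintegral_rnDeriv_rpow_sub_one (hQP : Q ≪ P) (hα : 1 ≤ α) :
    ∫⁻ x, Q.rnDeriv P x ^ (α - 1) ∂Q = ∫⁻ x, Q.rnDeriv P x ^ α ∂P := by
  rw [← lintegral_rnDeriv_mul hQP ((Measure.measurable_rnDeriv Q P).pow_const _).aemeasurable]
  simp_rw [ENNReal.rpow_eq_mul_rpow_sub_one hα]

lemma lintegral_rpow_sub_one_le (hQP : Q ≪ P) (hα : 1 < α) {u : Ω → ℝ≥0∞}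
    (hu : AEMeasurable u P) :
    ∫⁻ x, u x ^ (α - 1) ∂Q
      ≤ (∫⁻ x, u x ^ α ∂P) ^ ((α - 1) / α) * (∫⁻ x, Q.rnDeriv P x ^ α ∂P) ^ α⁻¹ := by
  have hα1 : α - 1 ≠ 0 := by linarith
  rw [← lintegral_rnDeriv_mul hQP (hu.pow_const _)]
  calc ∫⁻ x, Q.rnDeriv P x * u x ^ (α - 1) ∂P
      = ∫⁻ x, ((fun x ↦ u x ^ (α - 1)) * Q.rnDeriv P) x ∂P := by
        simp_rw [Pi.mul_apply, mul_comm]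
    _ ≤ _ := ENNReal.lintegral_mul_le_Lp_mul_Lq P (Real.HolderConjugate.conjExponent hα).symm
          (hu.pow_const _) (Measure.measurable_rnDeriv Q P).aemeasurable
    _ = _ := by
      simp_rw [← ENNReal.rpow_mul, Real.conjExponent, one_div, inv_div]
      field_simp

end ChangeOfMeasure

noncomputable def renyiObjective (Q P : Measure Ω) (α : ℝ) (g : Ω → ℝ) : ℝ :=
  (α - 1)⁻¹ * Real.log (∫ x, exp ((α - 1) * g x) ∂Q) - α⁻¹ * Real.log (∫ x, exp (α * g x) ∂P)

section ProbabilityMeasures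

variable {Q P : Measure Ω} [IsProbabilityMeasure Q] [IsProbabilityMeasure P] {α : ℝ}

lemma one_le_lintegral_rnDeriv_rpow (hQP : Q ≪ P) (hα : 1 < α) :
    1 ≤ ∫⁻ x, Q.rnDeriv P x ^ α ∂P := by
  have h := lintegral_rpow_sub_one_le hQP hα (u := 1) aemeasurable_const
  simp only [Pi.one_apply, ENNReal.one_rpow, lintegral_const, measure_univ, mul_one] at h
  simpa [ENNReal.rpow_inv_rpow (by linarith : α ≠ 0)] using
    ENNReal.rpow_le_rpow h (by linarith : 0 ≤ α)

lemma renyiObjective_le (hQP : Q ≪ P) (hα : 1 < α) {g : Ω → ℝ} (hg : Measurable g) {C : ℝ}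
    (hC : ∀ x, |g x| ≤ C) (hI : ∫⁻ x, Q.rnDeriv P x ^ α ∂P ≠ ⊤) :
    renyiObjective Q P α g
      ≤ (α * (α - 1))⁻¹ * Real.log (∫⁻ x, Q.rnDeriv P x ^ α ∂P).toReal := by
  set I := ∫⁻ x, Q.rnDeriv P x ^ α ∂P
  set a := ∫ x, exp ((α - 1) * g x) ∂Q
  set b := ∫ x, exp (α * g x) ∂P
  have ha : 0 < a := integral_exp_mul_pos hg hC _
  have hb : 0 < b := integral_exp_mul_pos hg hC _
  have hi : 0 < I.toReal :=
    ENNReal.toReal_pos (one_pos.trans_le (one_le_lintegral_rnDeriv_rpow hQP hα)).ne' hI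
  have hHolder : a ≤ b ^ ((α - 1) / α) * I.toReal ^ α⁻¹ := by
    rw [← ENNReal.ofReal_le_ofReal_iff (by positivity), ENNReal.ofReal_mul (by positivity),
      ← ENNReal.ofReal_rpow_of_pos hb, ← ENNReal.ofReal_rpow_of_pos hi, ENNReal.ofReal_toReal hI,
      ofReal_integral_exp_mul hg hC, ofReal_integral_exp_mul hg hC]
    exact lintegral_rpow_sub_one_le hQP hα (hg.exp.ennreal_ofReal.aemeasurable)
  have hlog := Real.log_le_log ha hHolder
  rw [Real.log_mul (by positivity) (by positivity), Real.log_rpow hb, Real.log_rpow hi] at hlog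
  have hα1 : 0 < α - 1 := by linarith
  have key : (α - 1)⁻¹ * ((α - 1) / α * Real.log b + α⁻¹ * Real.log I.toReal)
      = α⁻¹ * Real.log b + (α * (α - 1))⁻¹ * Real.log I.toReal := by
    field_simp
  unfold renyiObjective
  linarith [mul_le_mul_of_nonneg_left hlog (inv_nonneg.2 hα1.le)]

lemma coe_renyiObjective_le_log (hQP : Q ≪ P) (hα : 1 < α) {g : Ω → ℝ} (hg : Measurable g)
    {C : ℝ} (hC : ∀ x, |g x| ≤ C) :
    (renyiObjective Q P α g : EReal)
      ≤ ENNReal.log ((∫⁻ x, Q.rnDeriv P x ^ α ∂P) ^ (α * (α - 1))⁻¹) := by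
  have hc : 0 < (α * (α - 1))⁻¹ := inv_pos.2 (mul_pos (by linarith) (by linarith))
  obtain hI | hI := eq_or_ne (∫⁻ x, Q.rnDeriv P x ^ α ∂P) ⊤
  · rw [hI, ENNReal.top_rpow_of_pos hc, ENNReal.log_top]
    exact le_top
  have hI0 := (one_pos.trans_le (one_le_lintegral_rnDeriv_rpow hQP hα)).ne'
  rw [ENNReal.log_rpow, ENNReal.log_pos_real hI0 hI, ← EReal.coe_mul, EReal.coe_le_coe_iff]
  exact renyiObjective_le hQP hα hg hC hI

lemma lintegral_rpow_le_one_add_mul (hQP : Q ≪ P) (hα : 1 < α) {u : Ω → ℝ≥0∞}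
    (hu : Measurable u) {δ : ℝ≥0∞} (hδu : ∀ x, δ ≤ u x)
    (hu_eq : ∀ x, u x = δ ∨ u x ≤ Q.rnDeriv P x) :
    ∫⁻ x, u x ^ α ∂P ≤ (1 + δ) * ∫⁻ x, u x ^ (α - 1) ∂Q := by
  set A := ∫⁻ x, u x ^ (α - 1) ∂Q
  have hpoint : ∀ x, u x ^ α ≤ Q.rnDeriv P x * u x ^ (α - 1) + δ ^ α := fun x ↦ by
    rcases hu_eq x with h | h
    · rw [h]
      exact le_add_self
    · rw [ENNReal.rpow_eq_mul_rpow_sub_one hα.le]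
      exact le_add_right (by gcongr)
  have hδA : δ ^ (α - 1) ≤ A := by
    calc δ ^ (α - 1) = ∫⁻ _, δ ^ (α - 1) ∂Q := by simp
      _ ≤ A := lintegral_mono fun x ↦ ENNReal.rpow_le_rpow (hδu x) (by linarith)
  calc ∫⁻ x, u x ^ α ∂P
      ≤ ∫⁻ x, Q.rnDeriv P x * u x ^ (α - 1) + δ ^ α ∂P := lintegral_mono hpoint
    _ = A + δ * δ ^ (α - 1) := by
      rw [lintegral_add_right _ measurable_const, lintegral_rnDeriv_mul hQP
        (hu.pow_const _).aemeasurable, lintegral_const, measure_univ, mul_one,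
        ENNReal.rpow_eq_mul_rpow_sub_one hα.le]
    _ ≤ (1 + δ) * A := by
      rw [add_mul, one_mul]
      gcongr

lemma renyiObjective_logClampExp_ge (hQP : Q ≪ P) (hα : 1 < α) (n : ℕ) :
    (α * (α - 1))⁻¹ * Real.log (∫ x, exp ((α - 1) * logClampExp (Q.rnDeriv P) n x) ∂Q)
        - α⁻¹ * Real.log (1 + exp (-n))
      ≤ renyiObjective Q P α (logClampExp (Q.rnDeriv P) n) := by
  set g := logClampExp (Q.rnDeriv P) n
  have hg : Measurable g := measurable_logClampExp (Measure.measurable_rnDeriv Q P) n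
  have hC := abs_logClampExp_le (Q.rnDeriv P) n
  set a := ∫ x, exp ((α - 1) * g x) ∂Q
  set b := ∫ x, exp (α * g x) ∂P
  have ha : 0 < a := integral_exp_mul_pos hg hC _
  have hb : 0 < b := integral_exp_mul_pos hg hC _
  have hba : b ≤ (1 + exp (-n)) * a := by
    rw [← ENNReal.ofReal_le_ofReal_iff (by positivity), ENNReal.ofReal_mul (by positivity),
      ENNReal.ofReal_add zero_le_one (exp_pos _).le, ENNReal.ofReal_one,
      ofReal_integral_exp_mul hg hC, ofReal_integral_exp_mul hg hC]
    simp_rw [g, ofReal_exp_logClampExp]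
    refine lintegral_rpow_le_one_add_mul hQP hα
      (measurable_clampExp (Measure.measurable_rnDeriv Q P) n) (fun x ↦ le_max_right _ _)
      fun x ↦ ?_
    rcases max_choice (min (Q.rnDeriv P x) (ENNReal.ofReal (exp n))) (ENNReal.ofReal (exp (-n)))
      with h | h
    · exact .inr (by rw [clampExp, h]; exact min_le_left _ _)
    · exact .inl (by rw [clampExp, h])
  have hlog : Real.log b ≤ Real.log (1 + exp (-n)) + Real.log a := by
    rw [← Real.log_mul (by positivity) ha.ne']
    exact Real.log_le_log hb hba
  have hc : (α * (α - 1))⁻¹ = (α - 1)⁻¹ - α⁻¹ := by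
    have : α - 1 ≠ 0 := by linarith
    field_simp
    ring
  unfold renyiObjective
  rw [hc]
  nlinarith [mul_le_mul_of_nonneg_left hlog (inv_nonneg.2 (by linarith : (0:ℝ) ≤ α))]

lemma log_rpow_lintegral_min_add_le_renyiObjective (hQP : Q ≪ P) (hα : 1 < α) (n : ℕ) :
    ENNReal.log ((∫⁻ x, min (Q.rnDeriv P x) (ENNReal.ofReal (exp n)) ^ (α - 1) ∂Q)
        ^ (α * (α - 1))⁻¹) + ((-(α⁻¹ * Real.log (1 + exp (-n))) : ℝ) : EReal)
      ≤ renyiObjective Q P α (logClampExp (Q.rnDeriv P) n) := by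
  set g := logClampExp (Q.rnDeriv P) n
  have hg : Measurable g := measurable_logClampExp (Measure.measurable_rnDeriv Q P) n
  have hC := abs_logClampExp_le (Q.rnDeriv P) n
  set a := ∫ x, exp ((α - 1) * g x) ∂Q
  have hmin : ∫⁻ x, min (Q.rnDeriv P x) (ENNReal.ofReal (exp n)) ^ (α - 1) ∂Q
      ≤ ENNReal.ofReal a := by
    rw [ofReal_integral_exp_mul hg hC]
    simp_rw [g, ofReal_exp_logClampExp]
    exact lintegral_mono fun x ↦ ENNReal.rpow_le_rpow (le_max_left _ _) (by linarith)
  calc _ ≤ ENNReal.log (ENNReal.ofReal a ^ (α * (α - 1))⁻¹)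
        + ((-(α⁻¹ * Real.log (1 + exp (-n))) : ℝ) : EReal) := by
        gcongr
    _ = ((α * (α - 1))⁻¹ * Real.log a - α⁻¹ * Real.log (1 + exp (-n)) : ℝ) := by
        rw [ENNReal.log_rpow, ENNReal.log_ofReal_of_pos (integral_exp_mul_pos hg hC _),
          ← EReal.coe_mul, ← EReal.coe_add, ← sub_eq_add_neg]
    _ ≤ _ := EReal.coe_le_coe_iff.2 (renyiObjective_logClampExp_ge hQP hα n)

lemma log_rpow_lintegral_le_iSup_renyiObjective (hQP : Q ≪ P) (hα : 1 < α) :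
    ENNReal.log ((∫⁻ x, Q.rnDeriv P x ^ α ∂P) ^ (α * (α - 1))⁻¹)
      ≤ ⨆ n : ℕ, (renyiObjective Q P α (logClampExp (Q.rnDeriv P) n) : EReal) := by
  have hmain := tendsto_lintegral_min_rpow (μ := Q) (Measure.measurable_rnDeriv Q P)
    (β := α - 1) (by linarith)
  rw [lintegral_rnDeriv_rpow_sub_one hQP hα.le] at hmain
  have hlog := (ENNReal.continuous_log.tendsto _).comp
    ((ENNReal.continuous_rpow_const (y := (α * (α - 1))⁻¹)).tendsto _ |>.comp hmain)
  have herr : Tendsto (fun n : ℕ ↦ ((-(α⁻¹ * Real.log (1 + exp (-n))) : ℝ) : EReal)) atTop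
      (𝓝 0) := by
    have hexp : Tendsto (fun n : ℕ ↦ exp (-n)) atTop (𝓝 0) :=
      tendsto_exp_neg_atTop_nhds_zero.comp tendsto_natCast_atTop_atTop
    have := (((tendsto_const_nhds (x := (1 : ℝ))).add hexp).log (by norm_num)).const_mul α⁻¹
    simpa using EReal.tendsto_coe.2 this.neg
  have hsum := (EReal.continuousAt_add (.inr (by simp)) (.inr (by simp))).tendsto.comp
    (hlog.prodMk_nhds herr)
  rw [add_zero] at hsum
  exact le_of_tendsto' hsum fun n ↦
    (log_rpow_lintegral_min_add_le_renyiObjective hQP hα n).trans (le_iSup_of_le n le_rfl)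

end ProbabilityMeasures

end

/-- For `α > 1` and `Q ≪ P`, the supremum over bounded measurable `g` of the
Rényi–Donsker–Varadhan objective equals `(1/(α(α-1))) log ∫ (dQ/dP)^α dP` (possibly `+∞`). -/
theorem renyi_sup_eq_of_ac {Ω : Type*} [MeasurableSpace Ω]
    (Q P : Measure Ω) [IsProbabilityMeasure Q] [IsProbabilityMeasure P]
    {α : ℝ} (hα : 1 < α) (hQP : Q ≪ P) :
    sSup {r : EReal | ∃ g : Ω → ℝ, Measurable g ∧ (∃ C, ∀ x, |g x| ≤ C) ∧
        r = (((α - 1)⁻¹ * Real.log (∫ x, Real.exp ((α - 1) * g x) ∂Q)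
              - α⁻¹ * Real.log (∫ x, Real.exp (α * g x) ∂P) : ℝ) : EReal)}
      = ((α * (α - 1))⁻¹ : ℝ) * ENNReal.log (∫⁻ x, (Q.rnDeriv P x) ^ α ∂P) := by
  rw [← ENNReal.log_rpow]
  refine le_antisymm (sSup_le ?_) ?_
  · rintro _ ⟨g, hg, ⟨C, hC⟩, rfl⟩
    exact coe_renyiObjective_le_log hQP hα hg hC
  · refine (log_rpow_lintegral_le_iSup_renyiObjective hQP hα).trans (iSup_le fun n ↦ le_sSup ?_)
    exact ⟨_, measurable_logClampExp (Measure.measurable_rnDeriv Q P) n,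
      ⟨n, abs_logClampExp_le _ n⟩, rfl⟩
end

section
/- For any measurable function g : Ω → ℝ with α > 1 and ∫ e^{αg} dP < ∞, one has (1/(α-1)) log ∫ e^{(α-1)g} dQ - (1/α) log ∫ e^{αg} dP ≤ R_α(Q‖P), where the left side may be -∞ or the first term may be +∞ (in which case the inequality still holds with the conventions stated). -/
open MeasureTheory Real Classical
open scoped ENNReal NNReal

/-!
Write `e^{(α-1)g} dQ = e^{(α-1)g} (dQ/dP) dP` and apply Hölder's inequality with the exponents
`α/(α-1)` and `α`: `∫ e^{(α-1)g} dQ ≤ (∫ e^{αg} dP)^{(α-1)/α} (∫ (dQ/dP)^α dP)^{1/α}`.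
Taking logarithms in `EReal`, where `ENNReal.log` turns products and powers into sums and
multiples even at `0` and `∞`, and dividing by `α - 1` gives the claim.
-/

theorem lintegral_le_lintegral_rpow_mul_lintegral_rnDeriv_rpow {Ω : Type*} [MeasurableSpace Ω]
    {Q P : Measure Ω} [Q.HaveLebesgueDecomposition P] (hQP : Q ≪ P) {p q : ℝ}
    (hpq : p.HolderConjugate q) {f : Ω → ℝ≥0∞} (hf : AEMeasurable f P) :
    ∫⁻ x, f x ∂Q
      ≤ (∫⁻ x, f x ^ p ∂P) ^ (1 / p) * (∫⁻ x, Q.rnDeriv P x ^ q ∂P) ^ (1 / q) := by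
  rw [← lintegral_rnDeriv_mul hQP hf]
  simpa only [Pi.mul_apply, mul_comm (f _)] using
    ENNReal.lintegral_mul_le_Lp_mul_Lq P hpq hf (Q.measurable_rnDeriv P).aemeasurable

theorem ENNReal.ofReal_exp_rpow (x y : ℝ) :
    ENNReal.ofReal (exp x) ^ y = ENNReal.ofReal (exp (x * y)) := by
  rw [ENNReal.ofReal_rpow_of_pos (exp_pos x), exp_mul]

theorem EReal.coe_mul_sub_le_of_le_add {a b c : EReal} {u s t : ℝ} (hu : 0 ≤ u)
    (h : a ≤ s * b + t * c) :
    (u : EReal) * a - ((u * s : ℝ) : EReal) * b ≤ ((u * t : ℝ) : EReal) * c := by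
  have hu' : (0 : EReal) ≤ u := EReal.coe_nonneg.2 hu
  refine EReal.sub_le_of_le_add' ?_
  calc (u : EReal) * a ≤ u * (s * b + t * c) := mul_le_mul_of_nonneg_left h hu'
    _ = _ := by
      rw [EReal.left_distrib_of_nonneg_of_ne_top hu' (EReal.coe_ne_top u), ← mul_assoc,
        ← mul_assoc, ← EReal.coe_mul, ← EReal.coe_mul]

theorem renyi_lower_bound_unbounded_gt_one_general {Ω : Type*} [MeasurableSpace Ω]
    (Q P : Measure Ω) [IsProbabilityMeasure Q] [IsProbabilityMeasure P]
    {α : ℝ} (hα : 1 < α) (g : Ω → ℝ) (hg : Measurable g) :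
    (((α - 1)⁻¹ : ℝ) : EReal)
        * ENNReal.log (∫⁻ x, ENNReal.ofReal (Real.exp ((α - 1) * g x)) ∂Q)
      - ((α⁻¹ : ℝ) : EReal) * ENNReal.log (∫⁻ x, ENNReal.ofReal (Real.exp (α * g x)) ∂P)
      ≤ if Q ≪ P then
          (((α * (α - 1))⁻¹ : ℝ) : EReal) * ENNReal.log (∫⁻ x, (Q.rnDeriv P x) ^ α ∂P)
        else ⊤ := by
  split_ifs with hQP
  · have hα1 : 0 < α - 1 := sub_pos.2 hα
    have hpq : (α / (α - 1)).HolderConjugate α := (Real.HolderConjugate.conjExponent hα).symm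
    have holder := lintegral_le_lintegral_rpow_mul_lintegral_rnDeriv_rpow hQP hpq
      (f := fun x ↦ ENNReal.ofReal (exp ((α - 1) * g x))) (by fun_prop)
    have hexp (x : Ω) : (α - 1) * g x * (α / (α - 1)) = α * g x := by
      field_simp [hα1.ne']
    simp only [ENNReal.ofReal_exp_rpow, hexp, one_div_div] at holder
    have hlog := ENNReal.log_monotone holder
    rw [ENNReal.log_mul_add, ENNReal.log_rpow, ENNReal.log_rpow] at hlog
    convert EReal.coe_mul_sub_le_of_le_add (u := (α - 1)⁻¹) (inv_pos.2 hα1).le hlog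
      using 4
    · field_simp [hα1.ne']
    · field_simp
  · exact le_top

/-- For measurable `g` (possibly unbounded), `α > 1` and `∫ e^{αg} dP < ∞`,
`(1/(α-1)) log ∫ e^{(α-1)g} dQ - (1/α) log ∫ e^{αg} dP ≤ R_α(Q‖P)`, where the first term
may be `+∞` (the inequality is stated in the extended reals, with Rényi divergence `+∞`
when `Q` is not absolutely continuous w.r.t. `P`). -/
theorem renyi_lower_bound_unbounded_gt_one {Ω : Type*} [MeasurableSpace Ω]
    (Q P : Measure Ω) [IsProbabilityMeasure Q] [IsProbabilityMeasure P]
    {α : ℝ} (hα : 1 < α) (g : Ω → ℝ) (hg : Measurable g)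
    (hfin : ∫⁻ x, ENNReal.ofReal (Real.exp (α * g x)) ∂P < ⊤) :
    (((α - 1)⁻¹ : ℝ) : EReal)
        * ENNReal.log (∫⁻ x, ENNReal.ofReal (Real.exp ((α - 1) * g x)) ∂Q)
      - ((α⁻¹ : ℝ) : EReal) * ENNReal.log (∫⁻ x, ENNReal.ofReal (Real.exp (α * g x)) ∂P)
      ≤ if Q ≪ P then
          (((α * (α - 1))⁻¹ : ℝ) : EReal) * ENNReal.log (∫⁻ x, (Q.rnDeriv P x) ^ α ∂P)
        else ⊤ :=
  renyi_lower_bound_unbounded_gt_one_general Q P hα g hg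
end
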